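/- Let λ > 0 and let u : [0,∞) → ℝ be continuous with u(x) > 0 for all x ≥ 0, continuously differentiable on (0,∞), with ∫₀^∞ u(x)² g(x) dx < ∞ and ∫₀^∞ u'(x)² g(x) dx < ∞. Assume that x ↦ g(x)u'(x) extends to a continuous function on [0,∞) which is differentiable on (0,1) ∪ (1,∞) with (g(x)u'(x))' = λ g(x) u(x) there. Then: (a) x ↦ g(x)u'(x) is nondecreasing on [0,∞) and lim_{x→∞} g(x)u'(x) = 0; (b) u'(x) ≤ 0 for every x ∈ (0,∞); (c) there exist C > 0 and δ > 0 such that g(x)u(x) ≤ C e^{−δx} for every x ≥ 1. -/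

import Mathlib

open MeasureTheory Set

/-- The weight `g(x) = 4` for `x ≤ 1` and `g(x) = 4(2x−1)` for `x > 1`. -/
noncomputable def g (x : ℝ) : ℝ := if x ≤ 1 then 4 else 4 * (2 * x - 1)

/-- `u` belongs to the weighted Sobolev space `H¹(ℝ⁺, g dx)` with derivative
`u'`: it is locally absolutely continuous on `[0,∞)` (primitive of `u'`) and
both `u² g` and `u'² g` are integrable on `(0,∞)`. -/
def InH1g (u u' : ℝ → ℝ) : Prop :=
  IntegrableOn (fun x => (u x) ^ 2 * g x) (Ioi 0) ∧
    IntegrableOn (fun x => (u' x) ^ 2 * g x) (Ioi 0) ∧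
    ∀ a b : ℝ, 0 ≤ a → 0 ≤ b → u b - u a = ∫ x in a..b, u' x

/-- The weighted mass `∫₀^∞ u² g dx`. -/
noncomputable def massg (u : ℝ → ℝ) : ℝ := ∫ x in Ioi (0 : ℝ), (u x) ^ 2 * g x

/-- The reduced energy `Ẽ_{q,α}(u) = (1/2)∫₀^∞ u'² g dx − (α/q)|u(0)|^q`. -/
noncomputable def energyg (q α : ℝ) (u u' : ℝ → ℝ) : ℝ :=
  (1 / 2) * (∫ x in Ioi (0 : ℝ), (u' x) ^ 2 * g x) - (α / q) * |u 0| ^ q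

/-- The set of reduced energies over `X_μ = {u : 0 < ∫ u² g ≤ μ}`;
its infimum is `𝓔̃_{q,α}(μ)`. -/
def levelSetg (q α μ : ℝ) : Set ℝ :=
  {E | ∃ u u' : ℝ → ℝ, InH1g u u' ∧ 0 < massg u ∧ massg u ≤ μ ∧
    E = energyg q α u u'}

/-!
The flux `G = g u'` has derivative `λ g u > 0` off `x = 1`, so it is nondecreasing. Since
`u'² g = G² / g` is integrable and `g x ≤ 8 x`, `|G|` cannot stay above any `ε > 0` on a tail
(`∫ dx / x = ∞`); monotonicity then forces `G → 0`, hence `G ≤ 0` and `u' ≤ 0`.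

For the decay let `δ = √λ` and `w = G + δ g u`. On `(1, ∞)`, where `g' = 8`, one has
`w' = δ w + 8 δ u ≥ δ w`, so `w e^{-δx}` is nondecreasing; as `G ≤ 0` and `u` decreases,
`w e^{-δx} = O(x e^{-δx}) → 0`, hence `w ≤ 0`, i.e. `u' ≤ -δ u`. Thus `u ≤ C e^{-δx}` and
`g u ≤ 8 x u ≤ C' e^{-δx/2}`.
-/

open Filter Topology Real

lemma four_le_g (x : ℝ) : 4 ≤ g x := by
  unfold g
  split_ifs with hx
  · exact le_rfl
  · linarith [not_le.1 hx]

lemma g_pos (x : ℝ) : 0 < g x := by linarith [four_le_g x]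

lemma g_le_eight_mul {x : ℝ} (hx : 1 ≤ x) : g x ≤ 8 * x := by
  unfold g
  split_ifs <;> linarith

lemma continuous_g : Continuous g :=
  Continuous.if_le continuous_const (by fun_prop) continuous_id continuous_const
    fun x hx => by rw [hx]; norm_num

lemma hasDerivAt_g {x : ℝ} (hx : 1 < x) : HasDerivAt g 8 x := by
  have h : HasDerivAt (fun y : ℝ => 4 * (2 * y - 1)) 8 x :=
    ((((hasDerivAt_id' x).const_mul 2).sub_const 1).const_mul 4).congr_deriv (by norm_num)
  refine h.congr_of_eventuallyEq ?_
  filter_upwards [Ioi_mem_nhds hx] with y hy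
  simp [g, not_le.2 (mem_Ioi.1 hy)]

lemma not_integrableOn_Ioi_of_div_le {f : ℝ → ℝ} {a c : ℝ} (ha : 0 < a) (hc : 0 < c)
    (hf : ∀ x ∈ Ioi a, c / x ≤ f x) : ¬ IntegrableOn f (Ioi a) := by
  intro hfi
  have hdiv : IntegrableOn (fun x => c / x) (Ioi a) := by
    refine hfi.mono' (by fun_prop) ?_
    filter_upwards [ae_restrict_mem measurableSet_Ioi] with x hx
    rw [Real.norm_of_nonneg (div_pos hc (ha.trans hx)).le]
    exact hf x hx
  apply not_integrableOn_Ioi_inv (a := a)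
  have hinv : IntegrableOn (fun x => c⁻¹ * (c / x)) (Ioi a) := hdiv.const_mul c⁻¹
  exact hinv.congr_fun (fun x _ => by field_simp) measurableSet_Ioi

lemma frequently_abs_lt_of_integrableOn_sq_div_g {G : ℝ → ℝ}
    (hG : IntegrableOn (fun x => G x ^ 2 / g x) (Ioi 0)) {ε : ℝ} (hε : 0 < ε) :
    ∃ᶠ x in atTop, |G x| < ε := by
  by_contra h
  obtain ⟨b, hb⟩ := eventually_atTop.1 (not_frequently.1 h)
  refine not_integrableOn_Ioi_of_div_le (a := max b 1) (c := ε ^ 2 / 8) (by positivity)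
    (by positivity) (fun x hx => ?_) (hG.mono_set (Ioi_subset_Ioi (by positivity)))
  have hx1 : 1 ≤ x := (le_max_right b 1).trans (mem_Ioi.1 hx).le
  have hεG : ε ^ 2 ≤ G x ^ 2 := by
    have hεG' : ε ≤ |G x| := not_lt.1 (hb x ((le_max_left b 1).trans (mem_Ioi.1 hx).le))
    simpa only [sq_abs] using pow_le_pow_left₀ hε.le hεG' 2
  calc ε ^ 2 / 8 / x = ε ^ 2 / (8 * x) := by rw [div_div]
    _ ≤ G x ^ 2 / g x := div_le_div₀ (sq_nonneg _) hεG (g_pos x) (g_le_eight_mul hx1)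

theorem MonotoneOn.tendsto_atTop_of_frequently {f : ℝ → ℝ} {a l : ℝ} (hf : MonotoneOn f (Ici a))
    (hl : ∀ ε > 0, ∃ᶠ x in atTop, |f x - l| < ε) : Tendsto f atTop (𝓝 l) := by
  refine Metric.tendsto_atTop.2 fun ε hε => ?_
  obtain ⟨x₀, hx₀, hx₀a⟩ := ((hl ε hε).and_eventually (eventually_ge_atTop a)).exists
  refine ⟨x₀, fun x hx => ?_⟩
  obtain ⟨y, hy, hxy⟩ := ((hl ε hε).and_eventually (eventually_ge_atTop x)).exists
  have hfx₀ : f x₀ ≤ f x := hf hx₀a (hx₀a.trans hx) hx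
  have hfy : f x ≤ f y := hf (hx₀a.trans hx) (hx₀a.trans (hx.trans hxy)) hxy
  rw [Real.dist_eq, abs_sub_lt_iff]
  constructor <;> linarith [abs_sub_lt_iff.1 hx₀, abs_sub_lt_iff.1 hy]

theorem MonotoneOn.le_of_le_of_tendsto {f h : ℝ → ℝ} {a l x : ℝ} (hf : MonotoneOn f (Ici a))
    (hfh : ∀ y ∈ Ici a, f y ≤ h y) (hh : Tendsto h atTop (𝓝 l)) (hx : a ≤ x) : f x ≤ l :=
  ge_of_tendsto hh <| (eventually_ge_atTop x).mono fun y hy =>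
    (hf hx (hx.trans hy) hy).trans (hfh y (hx.trans hy))

lemma monotoneOn_mul_exp_neg_of_le_hasDerivAt {w w' : ℝ → ℝ} {a r : ℝ}
    (hw : ContinuousOn w (Ici a)) (hw' : ∀ x ∈ Ioi a, HasDerivAt w (w' x) x)
    (hle : ∀ x ∈ Ioi a, r * w x ≤ w' x) :
    MonotoneOn (fun x => w x * exp (-r * x)) (Ici a) := by
  have hexp (x : ℝ) : HasDerivAt (fun y => exp (-r * y)) (exp (-r * x) * -r) x := by
    simpa using ((hasDerivAt_id' x).const_mul (-r)).exp
  refine monotoneOn_of_hasDerivWithinAt_nonneg (convex_Ici a) (hw.mul (by fun_prop))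
    (fun x hx => ?_) (fun x hx => ?_) (f' := fun x => (w' x - r * w x) * exp (-r * x))
  · rw [interior_Ici] at hx ⊢
    exact ((hw' x hx).mul (hexp x)).hasDerivWithinAt.congr_deriv (by ring)
  · rw [interior_Ici] at hx
    exact mul_nonneg (sub_nonneg.2 (hle x hx)) (exp_pos _).le

lemma mul_exp_neg_le {δ : ℝ} (hδ : 0 < δ) (x : ℝ) :
    x * exp (-δ * x) ≤ 2 / δ * exp (-(δ / 2) * x) := by
  have hx : x ≤ 2 / δ * exp (δ / 2 * x) := by
    have := add_one_le_exp (δ / 2 * x)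
    rw [div_mul_eq_mul_div, le_div_iff₀ hδ]
    nlinarith
  have hhalf : exp (δ / 2 * x) * exp (-(δ / 2) * x) = 1 := by rw [← exp_add]; ring_nf; simp
  calc x * exp (-δ * x) = x * exp (-(δ / 2) * x) * exp (-(δ / 2) * x) := by
        rw [mul_assoc, ← exp_add]; ring_nf
    _ ≤ 2 / δ * exp (δ / 2 * x) * exp (-(δ / 2) * x) * exp (-(δ / 2) * x) := by gcongr
    _ = 2 / δ * exp (-(δ / 2) * x) := by rw [mul_assoc (2 / δ), hhalf, mul_one]

lemma tendsto_const_mul_exp_neg_mul_atTop {δ : ℝ} (hδ : 0 < δ) (C : ℝ) :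
    Tendsto (fun x => C * exp (-δ * x)) atTop (𝓝 0) := by
  simpa only [neg_mul, mul_zero, Function.comp_def, id] using
    (tendsto_exp_neg_atTop_nhds_zero.comp (tendsto_id.const_mul_atTop hδ)).const_mul C

lemma le_mul_exp_of_hasDerivAt_le {u u' : ℝ → ℝ} {a δ x : ℝ} (hu : ContinuousOn u (Ici a))
    (hu' : ∀ x ∈ Ioi a, HasDerivAt u (u' x) x) (hle : ∀ x ∈ Ioi a, u' x ≤ -δ * u x)
    (hx : a ≤ x) : u x ≤ u a * exp (-δ * (x - a)) := by
  have hmono := monotoneOn_mul_exp_neg_of_le_hasDerivAt (r := -δ) hu.neg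
    (fun x hx => (hu' x hx).neg) fun x hx => by simp only [Pi.neg_apply]; linarith [hle x hx]
  have hax : -u a * exp (- -δ * a) ≤ -u x * exp (- -δ * x) := hmono self_mem_Ici hx hx
  have hsplit : exp (-δ * (x - a)) = exp (- -δ * a) * exp (-δ * x) := by
    rw [← exp_add]; ring_nf
  have hcancel : exp (- -δ * x) * exp (-δ * x) = 1 := by rw [← exp_add]; simp
  calc u x = u x * exp (- -δ * x) * exp (-δ * x) := by rw [mul_assoc, hcancel, mul_one]
    _ ≤ u a * exp (- -δ * a) * exp (-δ * x) :=
        mul_le_mul_of_nonneg_right (by linarith) (exp_pos _).le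
    _ = u a * exp (-δ * (x - a)) := by rw [hsplit, mul_assoc]

section

variable {lam : ℝ} {u G : ℝ → ℝ}

lemma monotoneOn_flux (hlam : 0 < lam) (hpos : ∀ x : ℝ, 0 ≤ x → 0 < u x)
    (hGcont : ContinuousOn G (Ici 0))
    (hode : ∀ x ∈ Ioo (0 : ℝ) 1 ∪ Ioi 1, HasDerivAt G (lam * g x * u x) x) :
    MonotoneOn G (Ici 0) := by
  have hsource {x : ℝ} (hx : 0 < x) : 0 ≤ lam * g x * u x :=
    (mul_pos (mul_pos hlam (g_pos x)) (hpos x hx.le)).le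
  have hleft : MonotoneOn G (Icc 0 1) := by
    refine monotoneOn_of_hasDerivWithinAt_nonneg (f' := fun x => lam * g x * u x) (convex_Icc 0 1)
      (hGcont.mono Icc_subset_Ici_self) (fun x hx => ?_) (fun x hx => ?_)
    all_goals rw [interior_Icc] at hx
    · exact (hode x (Or.inl hx)).hasDerivWithinAt
    · exact hsource hx.1
  have hright : MonotoneOn G (Ici 1) := by
    refine monotoneOn_of_hasDerivWithinAt_nonneg (f' := fun x => lam * g x * u x) (convex_Ici 1)
      (hGcont.mono (Ici_subset_Ici.2 zero_le_one)) (fun x hx => ?_) (fun x hx => ?_)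
    all_goals rw [interior_Ici] at hx
    · exact (hode x (Or.inr hx)).hasDerivWithinAt
    · exact hsource (zero_lt_one.trans hx)
  rw [← Icc_union_Ici_eq_Ici zero_le_one]
  exact hleft.union_right hright (isGreatest_Icc zero_le_one) isLeast_Ici

lemma tendsto_flux_atTop_zero (hGmono : MonotoneOn G (Ici 0))
    (hint' : IntegrableOn (fun x => (deriv u x) ^ 2 * g x) (Ioi 0))
    (hGeq : ∀ x ∈ Ioi (0 : ℝ), G x = g x * deriv u x) : Tendsto G atTop (𝓝 0) := by
  have hGint : IntegrableOn (fun x => G x ^ 2 / g x) (Ioi 0) :=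
    hint'.congr_fun (fun x hx => by rw [hGeq x hx]; field_simp [(g_pos x).ne']) measurableSet_Ioi
  exact hGmono.tendsto_atTop_of_frequently fun ε hε => by
    simpa only [sub_zero] using frequently_abs_lt_of_integrableOn_sq_div_g hGint hε

lemma monotoneOn_flux_add_sqrt_mul_mul_exp (hlam : 0 < lam) (hpos : ∀ x : ℝ, 0 ≤ x → 0 < u x)
    (hu : ∀ x ∈ Ioi (0 : ℝ), HasDerivAt u (deriv u x) x) (hGcont : ContinuousOn G (Ici 0))
    (hGeq : ∀ x ∈ Ioi (0 : ℝ), G x = g x * deriv u x)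
    (hode : ∀ x ∈ Ioi (1 : ℝ), HasDerivAt G (lam * g x * u x) x) :
    MonotoneOn (fun x => (G x + √lam * (g x * u x)) * exp (-√lam * x)) (Ici 1) := by
  set δ := √lam
  have hδ : 0 < δ := sqrt_pos.2 hlam
  have hδsq : δ ^ 2 = lam := sq_sqrt hlam.le
  have hucont : ContinuousOn u (Ici 1) := fun x hx =>
    (hu x (mem_Ioi.2 (zero_lt_one.trans_le hx))).continuousAt.continuousWithinAt
  refine monotoneOn_mul_exp_neg_of_le_hasDerivAt
    ((hGcont.mono (Ici_subset_Ici.2 zero_le_one)).add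
      (continuousOn_const.mul (continuous_g.continuousOn.mul hucont)))
    (fun x hx => (hode x hx).add
      (((hasDerivAt_g hx).mul (hu x (mem_Ioi.2 (zero_lt_one.trans hx)))).const_mul δ))
    fun x hx => ?_
  have h8u := mul_pos hδ (hpos x (zero_le_one.trans (mem_Ioi.1 hx).le))
  rw [hGeq x (mem_Ioi.2 (zero_lt_one.trans hx)), ← hδsq]
  nlinarith

lemma deriv_le_neg_sqrt_mul (hlam : 0 < lam) (hpos : ∀ x : ℝ, 0 ≤ x → 0 < u x)
    (hu : ∀ x ∈ Ioi (0 : ℝ), HasDerivAt u (deriv u x) x) (hGcont : ContinuousOn G (Ici 0))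
    (hGeq : ∀ x ∈ Ioi (0 : ℝ), G x = g x * deriv u x)
    (hode : ∀ x ∈ Ioi (1 : ℝ), HasDerivAt G (lam * g x * u x) x)
    (hderiv : ∀ x ∈ Ioi (0 : ℝ), deriv u x ≤ 0) {x : ℝ} (hx : x ∈ Ioi 1) :
    deriv u x ≤ -√lam * u x := by
  set δ := √lam
  have hδ : 0 < δ := sqrt_pos.2 hlam
  have hanti : AntitoneOn u (Ici 1) := by
    refine antitoneOn_of_hasDerivWithinAt_nonpos (f' := deriv u) (convex_Ici 1)
      (fun y hy => (hu y (mem_Ioi.2 (zero_lt_one.trans_le hy))).continuousAt.continuousWithinAt)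
      (fun y hy => ?_) fun y hy => ?_
    all_goals rw [interior_Ici] at hy
    · exact (hu y (mem_Ioi.2 (zero_lt_one.trans hy))).hasDerivWithinAt
    · exact hderiv y (mem_Ioi.2 (zero_lt_one.trans hy))
  have hbound : ∀ y ∈ Ici (1 : ℝ),
      (G y + δ * (g y * u y)) * exp (-δ * y) ≤ 16 * u 1 * exp (-(δ / 2) * y) := by
    intro y hy
    have hy0 : (0 : ℝ) < y := zero_lt_one.trans_le hy
    have hGy : G y ≤ 0 := hGeq y hy0 ▸ mul_nonpos_of_nonneg_of_nonpos (g_pos y).le (hderiv y hy0)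
    have hgu : g y * u y ≤ 8 * y * u 1 :=
      mul_le_mul (g_le_eight_mul hy) (hanti self_mem_Ici hy hy) (hpos y hy0.le).le (by positivity)
    have hu1 := hpos 1 zero_le_one
    calc (G y + δ * (g y * u y)) * exp (-δ * y) ≤ 8 * δ * u 1 * y * exp (-δ * y) := by
          gcongr; nlinarith
      _ ≤ 8 * δ * u 1 * (2 / δ * exp (-(δ / 2) * y)) := by
          rw [mul_assoc]
          exact mul_le_mul_of_nonneg_left (mul_exp_neg_le hδ y) (by positivity)
      _ = 16 * u 1 * exp (-(δ / 2) * y) := by field_simp; ring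
  have hwx : (G x + δ * (g x * u x)) * exp (-δ * x) ≤ 0 :=
    (monotoneOn_flux_add_sqrt_mul_mul_exp hlam hpos hu hGcont hGeq hode).le_of_le_of_tendsto
      hbound (tendsto_const_mul_exp_neg_mul_atTop (half_pos hδ) _) (mem_Ioi.1 hx).le
  have hwx' : G x + δ * (g x * u x) ≤ 0 := nonpos_of_mul_nonpos_left hwx (exp_pos _)
  rw [hGeq x (mem_Ioi.2 (zero_lt_one.trans hx))] at hwx'
  nlinarith [g_pos x]

end

theorem stmt16_general (lam : ℝ) (hlam : 0 < lam) (u : ℝ → ℝ)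
    (hpos : ∀ x : ℝ, 0 ≤ x → 0 < u x)
    (hC1 : ContDiffOn ℝ 1 u (Ioi 0))
    (hint' : IntegrableOn (fun x => (deriv u x) ^ 2 * g x) (Ioi 0))
    (G : ℝ → ℝ) (hGcont : ContinuousOn G (Ici 0))
    (hGeq : ∀ x ∈ Ioi (0 : ℝ), G x = g x * deriv u x)
    (hode : ∀ x ∈ Ioo (0 : ℝ) 1 ∪ Ioi 1, HasDerivAt G (lam * g x * u x) x) :
    (MonotoneOn G (Ici 0) ∧ Filter.Tendsto G Filter.atTop (nhds 0)) ∧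
      (∀ x ∈ Ioi (0 : ℝ), deriv u x ≤ 0) ∧
      ∃ C : ℝ, 0 < C ∧ ∃ δ : ℝ, 0 < δ ∧
        ∀ x : ℝ, 1 ≤ x → g x * u x ≤ C * Real.exp (-δ * x) := by
  have hu : ∀ x ∈ Ioi (0 : ℝ), HasDerivAt u (deriv u x) x := fun x hx =>
    ((hC1.differentiableOn one_ne_zero).differentiableAt (Ioi_mem_nhds hx)).hasDerivAt
  have hGmono := monotoneOn_flux hlam hpos hGcont hode
  have hGlim := tendsto_flux_atTop_zero hGmono hint' hGeq
  have hderiv : ∀ x ∈ Ioi (0 : ℝ), deriv u x ≤ 0 := fun x hx =>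
    nonpos_of_mul_nonpos_right (hGeq x hx ▸ hGmono.le_of_le_of_tendsto (fun _ _ => le_rfl) hGlim
      (mem_Ioi.1 hx).le) (g_pos x)
  refine ⟨⟨hGmono, hGlim⟩, hderiv, ?_⟩
  set δ := √lam
  have hδ : 0 < δ := sqrt_pos.2 hlam
  have hu1 := hpos 1 zero_le_one
  refine ⟨16 * u 1 * exp δ / δ, by positivity, δ / 2, half_pos hδ, fun x hx => ?_⟩
  have hdecay : u x ≤ u 1 * exp (-δ * (x - 1)) :=
    le_mul_exp_of_hasDerivAt_le
      (fun y hy => (hu y (mem_Ioi.2 (zero_lt_one.trans_le hy))).continuousAt.continuousWithinAt)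
      (fun y hy => hu y (mem_Ioi.2 (zero_lt_one.trans hy)))
      (fun y hy => deriv_le_neg_sqrt_mul hlam hpos hu hGcont hGeq
        (fun z hz => hode z (Or.inr hz)) hderiv hy) hx
  calc g x * u x ≤ 8 * x * (u 1 * exp (-δ * (x - 1))) :=
        mul_le_mul (g_le_eight_mul hx) hdecay (hpos x (zero_le_one.trans hx)).le (by positivity)
    _ = 8 * u 1 * exp δ * (x * exp (-δ * x)) := by
        rw [show -δ * (x - 1) = δ + -δ * x by ring, exp_add]; ring
    _ ≤ 8 * u 1 * exp δ * (2 / δ * exp (-(δ / 2) * x)) :=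
        mul_le_mul_of_nonneg_left (mul_exp_neg_le hδ x) (by positivity)
    _ = 16 * u 1 * exp δ / δ * exp (-(δ / 2) * x) := by field_simp; ring

/-- Qualitative properties of positive solutions of `(g u')' = λ g u`, `λ > 0`,
on the weighted half-line: `g u'` is nondecreasing and tends to `0` at `+∞`,
`u' ≤ 0` on `(0,∞)`, and `g u` decays exponentially on `[1,∞)`. -/
theorem stmt16 (lam : ℝ) (hlam : 0 < lam) (u : ℝ → ℝ)
    (hcont : ContinuousOn u (Ici 0)) (hpos : ∀ x : ℝ, 0 ≤ x → 0 < u x)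
    (hC1 : ContDiffOn ℝ 1 u (Ioi 0))
    (hint : IntegrableOn (fun x => (u x) ^ 2 * g x) (Ioi 0))
    (hint' : IntegrableOn (fun x => (deriv u x) ^ 2 * g x) (Ioi 0))
    (G : ℝ → ℝ) (hGcont : ContinuousOn G (Ici 0))
    (hGeq : ∀ x ∈ Ioi (0 : ℝ), G x = g x * deriv u x)
    (hode : ∀ x ∈ Ioo (0 : ℝ) 1 ∪ Ioi 1, HasDerivAt G (lam * g x * u x) x) :
    (MonotoneOn G (Ici 0) ∧ Filter.Tendsto G Filter.atTop (nhds 0)) ∧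
      (∀ x ∈ Ioi (0 : ℝ), deriv u x ≤ 0) ∧
      ∃ C : ℝ, 0 < C ∧ ∃ δ : ℝ, 0 < δ ∧
        ∀ x : ℝ, 1 ≤ x → g x * u x ≤ C * Real.exp (-δ * x) :=
  stmt16_general lam hlam u hpos hC1 hint' G hGcont hGeq hode
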